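/- Let F(v) = (8/(3π)) · v · ₂F₁(1/2, 1/2; 5/2; v²), where ₂F₁ is the Gaussian hypergeometric function. Then for all v ∈ [−1/3, 1], v − F(v) < 2/3. -/
import Mathlib


open Real

/-- The Gaussian hypergeometric function `₂F₁(a,b;c;z)` as a power series. -/
noncomputable def hyp2F1 (a b c z : ℝ) : ℝ :=
  ∑' j : ℕ, ((ascPochhammer ℝ j).eval a * (ascPochhammer ℝ j).eval b
    / ((ascPochhammer ℝ j).eval c * (Nat.factorial j))) * z ^ j

/-- `F(v) = (8/(3π)) v ₂F₁(1/2,1/2;5/2;v²)`. -/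
noncomputable def Fqmc (v : ℝ) : ℝ :=
  (8 / (3 * Real.pi)) * v * hyp2F1 (1 / 2) (1 / 2) (5 / 2) (v ^ 2)

/-- The coefficient of the series. -/
noncomputable def fc (j : ℕ) : ℝ :=
  (ascPochhammer ℝ j).eval (1/2 : ℝ) * (ascPochhammer ℝ j).eval (1/2 : ℝ)
    / ((ascPochhammer ℝ j).eval (5/2 : ℝ) * (Nat.factorial j))

lemma fc_pos (j : ℕ) : 0 < fc j := by
  have h1 : 0 < (ascPochhammer ℝ j).eval (1/2 : ℝ) := ascPochhammer_pos j _ (by norm_num)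
  have h2 : 0 < (ascPochhammer ℝ j).eval (5/2 : ℝ) := ascPochhammer_pos j _ (by norm_num)
  have h3 : (0:ℝ) < (Nat.factorial j : ℝ) := by exact_mod_cast j.factorial_pos
  exact div_pos (mul_pos h1 h1) (mul_pos h2 h3)

lemma fc_zero : fc 0 = 1 := by
  simp [fc, ascPochhammer_zero]

lemma fc_succ (j : ℕ) :
    fc (j+1) = fc j * (((j:ℝ) + 1/2)^2 / (((j:ℝ) + 5/2) * ((j:ℝ) + 1))) := by
  have h1 : (ascPochhammer ℝ j).eval (1/2 : ℝ) ≠ 0 :=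
    ne_of_gt (ascPochhammer_pos j _ (by norm_num))
  have h2 : (ascPochhammer ℝ j).eval (5/2 : ℝ) ≠ 0 :=
    ne_of_gt (ascPochhammer_pos j _ (by norm_num))
  have h3 : ((Nat.factorial j : ℝ)) ≠ 0 := by exact_mod_cast j.factorial_ne_zero
  have h4 : ((j:ℝ) + 5/2) ≠ 0 := by positivity
  have h5 : ((j:ℝ) + 1) ≠ 0 := by positivity
  unfold fc
  rw [ascPochhammer_succ_eval, ascPochhammer_succ_eval, Nat.factorial_succ]
  push_cast
  field_simp
  ring

lemma fc_le_one (j : ℕ) : fc j ≤ 1 := by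
  induction j with
  | zero => rw [fc_zero]
  | succ n ih =>
    rw [fc_succ]
    have hn : (0:ℝ) ≤ (n:ℝ) := Nat.cast_nonneg n
    have hr : ((n:ℝ) + 1/2)^2 / (((n:ℝ) + 5/2) * ((n:ℝ) + 1)) ≤ 1 := by
      rw [div_le_one (by positivity)]
      nlinarith
    have hr0 : 0 ≤ ((n:ℝ) + 1/2)^2 / (((n:ℝ) + 5/2) * ((n:ℝ) + 1)) := by positivity
    nlinarith [fc_pos n]

lemma fc_le (j : ℕ) : fc j ≤ 3 / ((j:ℝ) + 1)^2 := by
  induction j with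
  | zero => rw [fc_zero]; norm_num
  | succ n ih =>
    rw [fc_succ]
    have hn : (0:ℝ) ≤ (n:ℝ) := Nat.cast_nonneg n
    have key : 3 / ((n:ℝ) + 1)^2 * (((n:ℝ) + 1/2)^2 / (((n:ℝ) + 5/2) * ((n:ℝ) + 1)))
        ≤ 3 / (((n:ℝ) + 1) + 1)^2 := by
      rw [div_mul_div_comm, div_le_div_iff₀ (by positivity) (by positivity)]
      nlinarith [sq_nonneg ((n:ℝ)), sq_nonneg ((n:ℝ)+1)]
    have hr0 : 0 ≤ ((n:ℝ) + 1/2)^2 / (((n:ℝ) + 5/2) * ((n:ℝ) + 1)) := by positivity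
    calc fc n * (((n:ℝ) + 1/2)^2 / (((n:ℝ) + 5/2) * ((n:ℝ) + 1)))
        ≤ 3 / ((n:ℝ) + 1)^2 * (((n:ℝ) + 1/2)^2 / (((n:ℝ) + 5/2) * ((n:ℝ) + 1))) :=
          mul_le_mul_of_nonneg_right ih hr0
      _ ≤ 3 / (((n:ℝ) + 1) + 1)^2 := key
      _ = 3 / (((n+1:ℕ):ℝ) + 1)^2 := by push_cast; ring_nf

lemma summable_aux : Summable (fun j : ℕ => 3 / ((j:ℝ) + 1)^2) := by
  have h := Real.summable_one_div_nat_pow.mpr (show 1 < 2 by norm_num)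
  have h2 := (summable_nat_add_iff 1).mpr h
  have h3 := h2.mul_left 3
  refine h3.congr fun n => ?_
  push_cast
  ring

lemma summable_series {z : ℝ} (hz0 : 0 ≤ z) (hz1 : z ≤ 1) :
    Summable (fun j : ℕ => fc j * z ^ j) := by
  refine Summable.of_nonneg_of_le
    (fun j => mul_nonneg (fc_pos j).le (pow_nonneg hz0 j)) (fun j => ?_) summable_aux
  calc fc j * z ^ j ≤ fc j * 1 := by
        have := pow_le_one₀ hz0 hz1 (n := j)
        nlinarith [fc_pos j]
    _ = fc j := mul_one _
    _ ≤ 3 / ((j:ℝ) + 1)^2 := fc_le j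

lemma hyp_eq (z : ℝ) : hyp2F1 (1/2) (1/2) (5/2) z = ∑' j : ℕ, fc j * z ^ j := rfl

lemma hyp_ge_one {z : ℝ} (hz0 : 0 ≤ z) (hz1 : z ≤ 1) :
    1 ≤ hyp2F1 (1/2) (1/2) (5/2) z := by
  rw [hyp_eq]
  have h := Summable.sum_le_tsum ({0} : Finset ℕ)
    (fun j _ => mul_nonneg (fc_pos j).le (pow_nonneg hz0 j)) (summable_series hz0 hz1)
  simpa [fc_zero] using h

lemma hyp_le {z : ℝ} (hz0 : 0 ≤ z) (hz1 : z ≤ 1/9) :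
    hyp2F1 (1/2) (1/2) (5/2) z ≤ 9/8 := by
  rw [hyp_eq]
  have hsum : Summable (fun j : ℕ => fc j * z ^ j) :=
    summable_series hz0 (by linarith)
  have hgeo : Summable (fun j : ℕ => ((1:ℝ)/9) ^ j) :=
    summable_geometric_of_lt_one (by norm_num) (by norm_num)
  have hle : ∀ j : ℕ, fc j * z ^ j ≤ ((1:ℝ)/9) ^ j := by
    intro j
    have h1 : z ^ j ≤ ((1:ℝ)/9) ^ j := pow_le_pow_left₀ hz0 hz1 j
    have h2 : (0:ℝ) ≤ z ^ j := pow_nonneg hz0 j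
    nlinarith [fc_le_one j, fc_pos j]
  calc (∑' j : ℕ, fc j * z ^ j) ≤ ∑' j : ℕ, ((1:ℝ)/9) ^ j := Summable.tsum_le_tsum hle hsum hgeo
    _ = (1 - 1/9)⁻¹ := tsum_geometric_of_lt_one (by norm_num) (by norm_num)
    _ = 9/8 := by norm_num

theorem v_sub_F_lt (v : ℝ) (hv : v ∈ Set.Icc (-(1 : ℝ) / 3) 1) :
    v - Fqmc v < 2 / 3 := by
  obtain ⟨hvl, hvr⟩ := hv
  have hπ3 : (3:ℝ) < Real.pi := Real.pi_gt_three
  have hπ4 : Real.pi < 3.15 := Real.pi_lt_d2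
  have hπ0 : (0:ℝ) < Real.pi := Real.pi_pos
  unfold Fqmc
  set H := hyp2F1 (1/2) (1/2) (5/2) (v ^ 2) with hH
  rcases le_or_gt 0 v with h0 | h0
  · -- 0 ≤ v ≤ 1
    have hz0 : (0:ℝ) ≤ v ^ 2 := sq_nonneg v
    have hz1 : v ^ 2 ≤ 1 := by nlinarith
    have hH1 : 1 ≤ H := hyp_ge_one hz0 hz1
    have hc : (1:ℝ)/3 < 8 / (3 * Real.pi) := by
      rw [div_lt_div_iff₀ (by norm_num) (by positivity)]
      nlinarith
    have hc0 : (0:ℝ) < 8 / (3 * Real.pi) := by positivity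
    have hF : 8 / (3 * Real.pi) * v ≤ 8 / (3 * Real.pi) * v * H := by
      nlinarith [mul_nonneg (mul_nonneg hc0.le h0) (sub_nonneg.mpr hH1)]
    have h1c : 8 / (3 * Real.pi) < 1 := by
      rw [div_lt_one (by positivity)]
      nlinarith
    have hkey : v - 8 / (3 * Real.pi) * v ≤ 1 - 8 / (3 * Real.pi) := by
      nlinarith [mul_nonneg (sub_nonneg.mpr hvr) (sub_nonneg.mpr h1c.le)]
    linarith
  · -- -1/3 ≤ v < 0
    have hz0 : (0:ℝ) ≤ v ^ 2 := sq_nonneg v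
    have hz1 : v ^ 2 ≤ 1/9 := by nlinarith
    have hH1 : 1 ≤ H := hyp_ge_one hz0 (by linarith)
    have hH2 : H ≤ 9/8 := hyp_le hz0 hz1
    have hc0 : (0:ℝ) < 8 / (3 * Real.pi) := by positivity
    have hc1 : 8 / (3 * Real.pi) * (9/8) < 1 := by
      rw [div_mul_eq_mul_div, div_lt_one (by positivity)]
      nlinarith
    have hcH : 8 / (3 * Real.pi) * H < 1 := by nlinarith
    have : v - 8 / (3 * Real.pi) * v * H = v * (1 - 8 / (3 * Real.pi) * H) := by ring
    rw [this]
    have := mul_neg_of_neg_of_pos h0 (by linarith : (0:ℝ) < 1 - 8 / (3 * Real.pi) * H)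
    linarith
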